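/- Let H ∈ ℝ^{M×N} and L ∈ ℝ^{m×N}. Fix a set S ⊆ {1,…,N} of r column indices and a coefficient matrix C̄ ∈ ℝ^{r×N}, and form the rank-r static-coefficient bi-fidelity estimates L̄ = L_S C̄ and H̄ = H_S C̄, where L_S and H_S denote the m×r and M×r submatrices consisting of the columns of L and H indexed by S. For τ ≥ 0 define ε(τ) = ‖HᵀH − τ LᵀL‖₂. Then for every τ ≥ 0 and every positive integer k ≤ rank(L), writing σ_j for the j-th largest singular value of L (and setting σ_{k+1} = 0 when k = rank(L)), one has ‖H − H̄‖₂ ≤ (1 + ‖C̄‖₂)·√(τ σ_{k+1}² + ε(τ)) + ‖L − L̄‖₂ · √(τ + ε(τ)/σ_k²). -/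

import Mathlib

open Matrix

/-- The spectral norm (largest singular value) of a real matrix, realized as the operator
norm of the induced linear map between Euclidean spaces. -/
noncomputable def specNorm {m n : ℕ} (A : Matrix (Fin m) (Fin n) ℝ) : ℝ :=
  ‖LinearMap.toContinuousLinearMap (Matrix.toEuclideanLin A)‖

lemma specNorm_nonneg' {m n : ℕ} (A : Matrix (Fin m) (Fin n) ℝ) : 0 ≤ specNorm A :=
  norm_nonneg _

lemma toE_apply_le {m n : ℕ} (A : Matrix (Fin m) (Fin n) ℝ) (x : EuclideanSpace ℝ (Fin n)) :
    ‖Matrix.toEuclideanLin A x‖ ≤ specNorm A * ‖x‖ := by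
  simpa [specNorm] using (LinearMap.toContinuousLinearMap (Matrix.toEuclideanLin A)).le_opNorm x

lemma toE_mul {p q n : ℕ} (A : Matrix (Fin p) (Fin q) ℝ) (B : Matrix (Fin q) (Fin n) ℝ)
    (x : EuclideanSpace ℝ (Fin n)) :
    Matrix.toEuclideanLin (A * B) x = Matrix.toEuclideanLin A (Matrix.toEuclideanLin B x) := by
  simp [Matrix.toEuclideanLin_apply, ← Matrix.mulVec_mulVec]

lemma toE_one {n : ℕ} (x : EuclideanSpace ℝ (Fin n)) :
    Matrix.toEuclideanLin (1 : Matrix (Fin n) (Fin n) ℝ) x = x := by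
  simp [Matrix.toEuclideanLin_apply, Matrix.one_mulVec]

lemma inner_gram {p n : ℕ} (A : Matrix (Fin p) (Fin n) ℝ) (y : EuclideanSpace ℝ (Fin n)) :
    inner ℝ (Matrix.toEuclideanLin (Aᵀ * A) y) y = ‖Matrix.toEuclideanLin A y‖^2 := by
  rw [← real_inner_self_eq_norm_sq]
  simp only [EuclideanSpace.inner_eq_star_dotProduct, Matrix.toEuclideanLin_apply, star_trivial]
  set v := y.ofLp with hv
  rw [← Matrix.mulVec_mulVec, Matrix.mulVec_transpose, dotProduct_comm, ← Matrix.dotProduct_mulVec]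

section sel
variable {N r : ℕ} (g : Fin r ↪ Fin N)

noncomputable def selMat : Matrix (Fin N) (Fin r) ℝ := fun i j => if i = g j then 1 else 0

lemma selMat_gram : (selMat g)ᵀ * selMat g = 1 := by
  ext j j'
  simp only [Matrix.mul_apply, Matrix.transpose_apply, selMat, Matrix.one_apply,
    ite_mul, one_mul, zero_mul]
  rw [Finset.sum_ite_eq' (Finset.univ) (g j)]
  simp [g.injective.eq_iff, eq_comm]

lemma submatrix_eq_mul_selMat {M : ℕ} (H : Matrix (Fin M) (Fin N) ℝ) :
    H.submatrix id g = H * selMat g := by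
  ext i j
  simp [Matrix.mul_apply, selMat, mul_ite, Finset.sum_ite_eq' Finset.univ (g j)]

lemma selMat_norm (x : EuclideanSpace ℝ (Fin r)) :
    ‖Matrix.toEuclideanLin (selMat g) x‖ = ‖x‖ := by
  have h1 := inner_gram (selMat g) x
  rw [selMat_gram, toE_one, real_inner_self_eq_norm_sq] at h1
  have := norm_nonneg (Matrix.toEuclideanLin (selMat g) x)
  nlinarith [norm_nonneg x]
end sel

set_option maxHeartbeats 1000000 in
lemma key_bound {M m N r : ℕ} (H : Matrix (Fin M) (Fin N) ℝ) (L : Matrix (Fin m) (Fin N) ℝ)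
    (g : Fin r ↪ Fin N) (Cbar : Matrix (Fin r) (Fin N) ℝ) (τ : ℝ) (hτ : 0 ≤ τ) :
    specNorm (H - H.submatrix id g * Cbar) ≤
      Real.sqrt τ * specNorm (L - L.submatrix id g * Cbar) +
      Real.sqrt (specNorm (Hᵀ * H - τ • (Lᵀ * L))) * (1 + specNorm Cbar) := by
  set ε := specNorm (Hᵀ * H - τ • (Lᵀ * L)) with hε
  have hε0 : 0 ≤ ε := specNorm_nonneg' _
  set D : Matrix (Fin N) (Fin N) ℝ := 1 - selMat g * Cbar with hD
  have hHD : H - H.submatrix id g * Cbar = H * D := by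
    rw [submatrix_eq_mul_selMat, hD, Matrix.mul_sub, Matrix.mul_one, Matrix.mul_assoc]
  have hLD : L - L.submatrix id g * Cbar = L * D := by
    rw [submatrix_eq_mul_selMat, hD, Matrix.mul_sub, Matrix.mul_one, Matrix.mul_assoc]
  set sL := specNorm (L - L.submatrix id g * Cbar) with hsL
  have hsL0 : 0 ≤ sL := specNorm_nonneg' _
  have hc0 : 0 ≤ specNorm Cbar := specNorm_nonneg' _
  rw [hHD, hLD] at *
  show specNorm (H * D) ≤ _
  have hbound : 0 ≤ Real.sqrt τ * sL + Real.sqrt ε * (1 + specNorm Cbar) := by positivity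
  refine ContinuousLinearMap.opNorm_le_bound _ hbound ?_
  intro x
  set y : EuclideanSpace ℝ (Fin N) := Matrix.toEuclideanLin D x with hy
  have h1 : Matrix.toEuclideanLin (H * D) x = Matrix.toEuclideanLin H y := toE_mul _ _ _
  -- ‖y‖ bound
  have hyn : ‖y‖ ≤ (1 + specNorm Cbar) * ‖x‖ := by
    have : y = x - Matrix.toEuclideanLin (selMat g) (Matrix.toEuclideanLin Cbar x) := by
      rw [hy, hD, map_sub, LinearMap.sub_apply, toE_one, toE_mul]
    rw [this]
    calc ‖x - Matrix.toEuclideanLin (selMat g) (Matrix.toEuclideanLin Cbar x)‖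
        ≤ ‖x‖ + ‖Matrix.toEuclideanLin (selMat g) (Matrix.toEuclideanLin Cbar x)‖ :=
          norm_sub_le _ _
      _ = ‖x‖ + ‖Matrix.toEuclideanLin Cbar x‖ := by rw [selMat_norm]
      _ ≤ ‖x‖ + specNorm Cbar * ‖x‖ := by linarith [toE_apply_le Cbar x]
      _ = (1 + specNorm Cbar) * ‖x‖ := by ring
  -- quadratic bound
  have hquad : ‖Matrix.toEuclideanLin H y‖^2 ≤ τ * ‖Matrix.toEuclideanLin L y‖^2 + ε * ‖y‖^2 := by
    have hgH := inner_gram H y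
    have hgL := inner_gram L y
    have hsplit : inner ℝ (Matrix.toEuclideanLin (Hᵀ * H - τ • (Lᵀ * L)) y) y
        = ‖Matrix.toEuclideanLin H y‖^2 - τ * ‖Matrix.toEuclideanLin L y‖^2 := by
      rw [map_sub, _root_.map_smul, LinearMap.sub_apply, LinearMap.smul_apply,
        inner_sub_left, real_inner_smul_left, hgH, hgL]
    have hib : inner ℝ (Matrix.toEuclideanLin (Hᵀ * H - τ • (Lᵀ * L)) y) y ≤ ε * ‖y‖^2 := by
      calc inner ℝ (Matrix.toEuclideanLin (Hᵀ * H - τ • (Lᵀ * L)) y) y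
          ≤ ‖Matrix.toEuclideanLin (Hᵀ * H - τ • (Lᵀ * L)) y‖ * ‖y‖ := real_inner_le_norm _ _
        _ ≤ (ε * ‖y‖) * ‖y‖ :=
            mul_le_mul_of_nonneg_right (toE_apply_le _ _) (norm_nonneg _)
        _ = ε * ‖y‖^2 := by ring
    rw [hsplit] at hib
    linarith
  -- take square roots
  have hLy : ‖Matrix.toEuclideanLin L y‖ ≤ sL * ‖x‖ := by
    have : Matrix.toEuclideanLin L y = Matrix.toEuclideanLin (L * D) x := (toE_mul _ _ _).symm
    rw [this, hsL]; exact toE_apply_le _ _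
  have hHy : ‖Matrix.toEuclideanLin H y‖ ≤
      Real.sqrt τ * ‖Matrix.toEuclideanLin L y‖ + Real.sqrt ε * ‖y‖ := by
    have ha : 0 ≤ Real.sqrt τ * ‖Matrix.toEuclideanLin L y‖ + Real.sqrt ε * ‖y‖ := by positivity
    have hsq : (Real.sqrt τ * ‖Matrix.toEuclideanLin L y‖ + Real.sqrt ε * ‖y‖)^2
        ≥ τ * ‖Matrix.toEuclideanLin L y‖^2 + ε * ‖y‖^2 := by
      have h1 : Real.sqrt τ ^ 2 = τ := Real.sq_sqrt hτ
      have h2 : Real.sqrt ε ^ 2 = ε := Real.sq_sqrt hε0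
      nlinarith [mul_nonneg (mul_nonneg (Real.sqrt_nonneg τ) (norm_nonneg
        (Matrix.toEuclideanLin L y))) (mul_nonneg (Real.sqrt_nonneg ε) (norm_nonneg y))]
    have hle : ‖Matrix.toEuclideanLin H y‖^2 ≤
        (Real.sqrt τ * ‖Matrix.toEuclideanLin L y‖ + Real.sqrt ε * ‖y‖)^2 :=
      le_trans hquad hsq
    calc ‖Matrix.toEuclideanLin H y‖
        = Real.sqrt (‖Matrix.toEuclideanLin H y‖^2) := (Real.sqrt_sq (norm_nonneg _)).symm
      _ ≤ Real.sqrt ((Real.sqrt τ * ‖Matrix.toEuclideanLin L y‖ + Real.sqrt ε * ‖y‖)^2) :=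
          Real.sqrt_le_sqrt hle
      _ = _ := Real.sqrt_sq ha
  calc ‖(LinearMap.toContinuousLinearMap (Matrix.toEuclideanLin (H * D))) x‖
      = ‖Matrix.toEuclideanLin H y‖ := by rw [LinearMap.coe_toContinuousLinearMap', h1]
    _ ≤ Real.sqrt τ * ‖Matrix.toEuclideanLin L y‖ + Real.sqrt ε * ‖y‖ := hHy
    _ ≤ Real.sqrt τ * (sL * ‖x‖) + Real.sqrt ε * ((1 + specNorm Cbar) * ‖x‖) := by
        gcongr <;> positivity
    _ = (Real.sqrt τ * sL + Real.sqrt ε * (1 + specNorm Cbar)) * ‖x‖ := by ring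


/-- **Bi-fidelity error bound (Theorem 1).**
Let `H ∈ ℝ^{M×N}` and `L ∈ ℝ^{m×N}`.  Fix `r` column indices (an injection `g : Fin r ↪ Fin N`)
and a coefficient matrix `C̄ ∈ ℝ^{r×N}`, and form the static-coefficient bi-fidelity estimates
`L̄ = L_S C̄` and `H̄ = H_S C̄`, where `L_S`, `H_S` consist of the selected columns of `L`, `H`.
For `τ ≥ 0` let `ε(τ) = ‖HᵀH − τ LᵀL‖₂`.  Then for every `τ ≥ 0` and every positive integer
`k ≤ rank L`, with `σ_j` the `j`-th largest singular value of `L` (and `σ_{k+1} = 0` when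
`k = rank L`, which is covered by the convention `σ_{k+1} = 0` whenever `k = N`):
`‖H − H̄‖₂ ≤ (1 + ‖C̄‖₂)√(τ σ_{k+1}² + ε(τ)) + ‖L − L̄‖₂ √(τ + ε(τ)/σ_k²)`. -/
theorem bifidelity_spectral_error_bound
    {M m N r : ℕ} (H : Matrix (Fin M) (Fin N) ℝ) (L : Matrix (Fin m) (Fin N) ℝ)
    (g : Fin r ↪ Fin N) (Cbar : Matrix (Fin r) (Fin N) ℝ)
    (Lbar : Matrix (Fin m) (Fin N) ℝ) (hLbar : Lbar = (L.submatrix id g) * Cbar)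
    (Hbar : Matrix (Fin M) (Fin N) ℝ) (hHbar : Hbar = (H.submatrix id g) * Cbar)
    -- `σ` enumerates the singular values of `L` (square roots of the eigenvalues of `LᵀL`)
    -- in nonincreasing order.
    (hherm : (Lᵀ * L).IsHermitian) (σ : Fin N → ℝ)
    (hσ : ∃ e : Equiv.Perm (Fin N), ∀ j, σ j = Real.sqrt (hherm.eigenvalues (e j)))
    (hσ_anti : Antitone σ)
    (τ : ℝ) (hτ : 0 ≤ τ)
    (k : ℕ) (hk : 1 ≤ k) (hkrank : k ≤ L.rank) :
    specNorm (H - Hbar) ≤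
      (1 + specNorm Cbar) *
        Real.sqrt (τ * (if h : k < N then σ ⟨k, h⟩ else 0) ^ 2
          + specNorm (Hᵀ * H - τ • (Lᵀ * L))) +
      specNorm (L - Lbar) *
        Real.sqrt (τ + specNorm (Hᵀ * H - τ • (Lᵀ * L)) /
          (σ ⟨k - 1, by
            have h2 : L.rank ≤ N := by simpa using L.rank_le_card_width
            omega⟩) ^ 2) := by
  subst hLbar hHbar
  have key := key_bound H L g Cbar τ hτ
  have hε0 : 0 ≤ specNorm (Hᵀ * H - τ • (Lᵀ * L)) := specNorm_nonneg' _
  have hc : (0:ℝ) ≤ 1 + specNorm Cbar := by linarith [specNorm_nonneg' Cbar]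
  have hsL : 0 ≤ specNorm (L - L.submatrix id g * Cbar) := specNorm_nonneg' _
  have h1 : ∀ a : ℝ, Real.sqrt (specNorm (Hᵀ * H - τ • (Lᵀ * L)))
      ≤ Real.sqrt (τ * a ^ 2 + specNorm (Hᵀ * H - τ • (Lᵀ * L))) := fun a =>
    Real.sqrt_le_sqrt (le_add_of_nonneg_left (mul_nonneg hτ (sq_nonneg a)))
  have h2 : ∀ s : ℝ, Real.sqrt τ
      ≤ Real.sqrt (τ + specNorm (Hᵀ * H - τ • (Lᵀ * L)) / s ^ 2) := fun s =>
    Real.sqrt_le_sqrt (le_add_of_nonneg_right (div_nonneg hε0 (sq_nonneg s)))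
  have A := mul_le_mul_of_nonneg_left (h1 (if h : k < N then σ ⟨k, h⟩ else 0)) hc
  have B := mul_le_mul_of_nonneg_left (h2 (σ ⟨k - 1, by
            have h2 : L.rank ≤ N := by simpa using L.rank_le_card_width
            omega⟩)) hsL
  linarith [key, A, B]
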